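/- Fix μ > 0, integers m ≥ 1, α ≥ 2, and 0 ≤ p ≤ 1 with (1−p)^{α−1} ≤ 1/(α·C(mα−1, α−1)). Then ∑_{φ=α}^{mα} [μα/(H_φ−H_{φ−α})]·C(mα,φ)(1−p)^φ p^{mα−φ} ≤ μm(1−p). That is, if p ≥ 1 − (α·C(mα−1,α−1))^{−1/(α−1)} for all α ≥ 2, the minimal spreading allocation maximizes the service rate under the probabilistic access model with scaled exponential service. -/

import Mathlib

/-!
Write `n = m α` and `q = 1 - p`. The difference `H φ - H (φ - α)` is a sum of `α` terms, each at
least `1 / φ`, so the weight `μ α / (H φ - H (φ - α))` is at most `μ φ`. Next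
`φ C(n, φ) = n C(n - 1, φ - 1) ≤ n C(n - 1, α - 1) C(n - α, φ - α)`, and by the binomial theorem the
terms `C(n - α, φ - α) q ^ φ p ^ (n - φ)` sum to `q ^ α`. The sum is therefore at most
`μ n C(n - 1, α - 1) q ^ α`, which the hypothesis on `q ^ (α - 1)` bounds by `μ m q`.
-/

open Finset
noncomputable def H (n : ℕ) : ℝ := ∑ i ∈ Finset.Icc 1 n, (1 : ℝ) / i

lemma H_sub_H_eq_sum_Ioc {k n : ℕ} (h : k ≤ n) : H n - H k = ∑ i ∈ Ioc k n, (1 : ℝ) / i := by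
  have hIcc (j : ℕ) : Icc 1 j = Ioc 0 j := Icc_add_one_left_eq_Ioc 0 j
  rw [H, H, hIcc, hIcc, ← sum_Ioc_consecutive _ k.zero_le h, add_sub_cancel_left]

lemma div_le_H_sub_H {α φ : ℕ} (h : α ≤ φ) : (α : ℝ) / φ ≤ H φ - H (φ - α) := by
  have hcard : #(Ioc (φ - α) φ) = α := by rw [Nat.card_Ioc]; omega
  rw [H_sub_H_eq_sum_Ioc (φ.sub_le α), div_eq_mul_one_div]
  calc (α : ℝ) * (1 / φ) = #(Ioc (φ - α) φ) • (1 / φ : ℝ) := by rw [hcard, nsmul_eq_mul]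
    _ ≤ ∑ i ∈ Ioc (φ - α) φ, (1 : ℝ) / i := card_nsmul_le_sum _ _ _ fun i hi => by
      rw [mem_Ioc] at hi
      gcongr
      · exact_mod_cast (by omega : 0 < i)
      · exact_mod_cast hi.2

lemma div_H_sub_H_le {α φ : ℕ} (hα : 0 < α) (h : α ≤ φ) : (α : ℝ) / (H φ - H (φ - α)) ≤ φ := by
  have hφ : (0 : ℝ) < φ := by exact_mod_cast hα.trans_le h
  have hpos : 0 < H φ - H (φ - α) := (by positivity : (0 : ℝ) < α / φ).trans_le (div_le_H_sub_H h)
  rw [div_le_iff₀ hpos, ← div_le_iff₀' hφ]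
  exact div_le_H_sub_H h

theorem Nat.mul_choose_eq {n k : ℕ} (hk : 0 < k) : k * n.choose k = n * (n - 1).choose (k - 1) := by
  obtain ⟨k, rfl⟩ := Nat.exists_eq_add_of_le' hk
  rcases n with _ | n
  · simp
  · rw [Nat.add_sub_cancel, Nat.add_sub_cancel, Nat.add_one_mul_choose_eq, mul_comm]

theorem Nat.mul_choose_le_mul_choose_mul_choose {n k s : ℕ} (hs : 0 < s) (hsk : s ≤ k) :
    k * n.choose k ≤ n * (n - 1).choose (s - 1) * (n - s).choose (k - s) := by
  have hchoose_mul := Nat.choose_mul (n := n - 1) (Nat.sub_le_sub_right hsk 1)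
  rw [Nat.sub_sub_sub_cancel_right hs, Nat.sub_sub_sub_cancel_right hs] at hchoose_mul
  rw [Nat.mul_choose_eq (hs.trans_le hsk), mul_assoc, ← hchoose_mul]
  exact Nat.mul_le_mul_left n (Nat.le_mul_of_pos_right _ (Nat.choose_pos (by omega)))

lemma mul_div_H_sub_H_mul_choose_le {μ : ℝ} (hμ : 0 ≤ μ) {n α φ : ℕ} (hα : 0 < α) (h : α ≤ φ) :
    μ * α / (H φ - H (φ - α)) * n.choose φ ≤
      μ * n * (n - 1).choose (α - 1) * (n - α).choose (φ - α) := by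
  have hnat : (φ * n.choose φ : ℝ) ≤ n * (n - 1).choose (α - 1) * (n - α).choose (φ - α) := by
    exact_mod_cast Nat.mul_choose_le_mul_choose_mul_choose hα h
  calc μ * α / (H φ - H (φ - α)) * n.choose φ
      = μ * (α / (H φ - H (φ - α)) * n.choose φ) := by ring
    _ ≤ μ * (φ * n.choose φ) := by gcongr; exact div_H_sub_H_le hα h
    _ ≤ _ := by rw [mul_assoc μ, mul_assoc μ]; gcongr

theorem sum_Icc_choose_sub_mul_pow_mul_pow {R : Type*} [CommSemiring R] (x y : R) {a n : ℕ}
    (h : a ≤ n) :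
    ∑ k ∈ Icc a n, ((n - a).choose (k - a) : R) * x ^ k * y ^ (n - k) =
      x ^ a * (x + y) ^ (n - a) := by
  rw [add_pow, mul_sum, ← Ico_add_one_right_eq_Icc, sum_Ico_eq_sum_range, Nat.sub_add_comm h]
  refine sum_congr rfl fun i _ => ?_
  rw [Nat.add_sub_cancel_left, pow_add, show n - (a + i) = n - a - i by omega]
  ring

theorem stmt14 (μ p : ℝ) (hμ : 0 < μ) (hp0 : 0 ≤ p) (hp1 : p ≤ 1)
    (m α : ℕ) (hm : 1 ≤ m) (hα : 2 ≤ α)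
    (hcond : (1 - p) ^ (α - 1) ≤ 1 / ((α : ℝ) * ((m * α - 1).choose (α - 1)))) :
    ∑ φ ∈ Finset.Icc α (m * α),
        (μ * α / (H φ - H (φ - α))) * ((m * α).choose φ) * (1 - p) ^ φ * p ^ (m * α - φ)
      ≤ μ * m * (1 - p) := by
  set n := m * α with hn
  set C : ℝ := ↑((n - 1).choose (α - 1))
  have hq : 0 ≤ 1 - p := sub_nonneg.2 hp1
  have hαn : α ≤ n := Nat.le_mul_of_pos_left α hm
  have hC : 0 < C := Nat.cast_pos.2 (Nat.choose_pos (by omega))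
  have hcond_mul : (1 - p) ^ (α - 1) * (α * C) ≤ 1 := by
    rwa [le_div_iff₀ (by positivity)] at hcond
  calc _ ≤ ∑ φ ∈ Icc α n,
        μ * n * C * (((n - α).choose (φ - α) : ℝ) * (1 - p) ^ φ * p ^ (n - φ)) := by
        refine sum_le_sum fun φ hφ => ?_
        calc _ ≤ μ * n * C * (n - α).choose (φ - α) * (1 - p) ^ φ * p ^ (n - φ) := by
              gcongr ?_ * _ * _
              exact mul_div_H_sub_H_mul_choose_le hμ.le (by omega) (mem_Icc.1 hφ).1
          _ = _ := by ring
    _ = μ * m * (1 - p) * ((1 - p) ^ (α - 1) * (α * C)) := by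
        rw [← mul_sum, sum_Icc_choose_sub_mul_pow_mul_pow _ _ hαn, sub_add_cancel, one_pow,
          mul_one, ← pow_sub_one_mul (by omega : α ≠ 0)]
        push_cast [hn]
        ring
    _ ≤ μ * m * (1 - p) := mul_le_of_le_one_right (by positivity) hcond_mul
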